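/- arXiv:1812.02974 — 11 statements merged into one kernel-verified Lean document; each statement's English description precedes it below -/
import Mathlib

section
/- Let n ≥ 1 and let s, y ∈ ℝⁿ satisfy sᵀy > 0. Then for every τ ∈ [0,1] there exists α with αBB2 ≤ α ≤ αBB1 such that ψ(τ, α) = 0. -/
/-! The cubic-plus-linear function `ψ τ` is `≤ 0` at `αBB2` (its cubic part vanishes there) and
`≥ 0` at `αBB1` (its linear part vanishes there), and `αBB2 ≤ αBB1` by Cauchy–Schwarz; the
intermediate value theorem gives the root. -/

open Finset

theorem div_sum_mul_self_le_sum_mul_self_div {R ι : Type*} [Field R] [LinearOrder R]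
    [IsStrictOrderedRing R] (t : Finset ι) (s y : ι → R) (hsy : 0 < ∑ i ∈ t, s i * y i) :
    (∑ i ∈ t, s i * y i) / (∑ i ∈ t, y i * y i) ≤
      (∑ i ∈ t, s i * s i) / (∑ i ∈ t, s i * y i) := by
  have hcs : (∑ i ∈ t, s i * y i) ^ 2 ≤ (∑ i ∈ t, s i * s i) * ∑ i ∈ t, y i * y i := by
    simpa only [sq] using sum_mul_sq_le_sq_mul_sq t s y
  have hY : 0 < ∑ i ∈ t, y i * y i :=
    pos_of_mul_pos_right ((pow_pos hsy 2).trans_le hcs)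
      (sum_nonneg fun i _ => mul_self_nonneg (s i))
  rw [div_le_div_iff₀ hY hsy]
  simpa only [sq] using hcs

theorem exists_mem_Icc_cubic_add_linear_eq_zero {p q a b : ℝ} (hp : 0 ≤ p) (hq : 0 ≤ q)
    (hab : a ≤ b) :
    ∃ α ∈ Set.Icc a b, p * (α ^ 3 - α ^ 2 * a) + q * (α - b) = 0 := by
  have hleft : p * (a ^ 3 - a ^ 2 * a) + q * (a - b) ≤ 0 := by
    nlinarith [mul_nonneg hq (sub_nonneg.2 hab)]
  have hright : 0 ≤ p * (b ^ 3 - b ^ 2 * a) + q * (b - b) := by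
    nlinarith [mul_nonneg (mul_nonneg hp (sq_nonneg b)) (sub_nonneg.2 hab)]
  exact intermediate_value_Icc hab (by fun_prop) ⟨hleft, hright⟩

theorem stmt_0_general (n : ℕ) (s y : Fin n → ℝ)
    (hsy : 0 < ∑ i, s i * y i)
    (aBB1 aBB2 : ℝ)
    (h1 : aBB1 = (∑ i, s i * s i) / (∑ i, s i * y i))
    (h2 : aBB2 = (∑ i, s i * y i) / (∑ i, y i * y i))
    (ψ : ℝ → ℝ → ℝ)
    (hψ : ∀ τ α : ℝ, ψ τ α =
      (1 - τ) * (∑ i, y i * y i) * (α ^ 3 - α ^ 2 * aBB2)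
        + τ * (∑ i, s i * y i) * (α - aBB1)) :
    ∀ τ ∈ Set.Icc (0 : ℝ) 1, ∃ α : ℝ, aBB2 ≤ α ∧ α ≤ aBB1 ∧ ψ τ α = 0 := by
  rintro τ ⟨hτ0, hτ1⟩
  have hle : aBB2 ≤ aBB1 := h1 ▸ h2 ▸ div_sum_mul_self_le_sum_mul_self_div univ s y hsy
  have hY : 0 ≤ ∑ i, y i * y i := sum_nonneg fun i _ => mul_self_nonneg (y i)
  obtain ⟨α, ⟨hα2, hα1⟩, hroot⟩ := exists_mem_Icc_cubic_add_linear_eq_zero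
    (mul_nonneg (sub_nonneg.2 hτ1) hY) (mul_nonneg hτ0 hsy.le) hle
  exact ⟨α, hα2, hα1, (hψ τ α).trans hroot⟩

theorem stmt_0 (n : ℕ) (hn : 1 ≤ n) (s y : Fin n → ℝ)
    (hsy : 0 < ∑ i, s i * y i)
    (aBB1 aBB2 : ℝ)
    (h1 : aBB1 = (∑ i, s i * s i) / (∑ i, s i * y i))
    (h2 : aBB2 = (∑ i, s i * y i) / (∑ i, y i * y i))
    (ψ : ℝ → ℝ → ℝ)
    (hψ : ∀ τ α : ℝ, ψ τ α =
      (1 - τ) * (∑ i, y i * y i) * (α ^ 3 - α ^ 2 * aBB2)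
        + τ * (∑ i, s i * y i) * (α - aBB1)) :
    ∀ τ ∈ Set.Icc (0 : ℝ) 1, ∃ α : ℝ, aBB2 ≤ α ∧ α ≤ aBB1 ∧ ψ τ α = 0 :=
  stmt_0_general n s y hsy aBB1 aBB2 h1 h2 ψ hψ
end

section
/- Let n ≥ 1 and let s, y ∈ ℝⁿ satisfy sᵀy > 0, and let τ ∈ [0,1]. If α₁ and α₂ both lie in the interval [αBB2, αBB1] and satisfy ψ(τ, α₁) = 0 and ψ(τ, α₂) = 0, then α₁ = α₂; i.e., ψ(τ, ·) has a unique root in [αBB2, αBB1]. -/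
/-! On `[αBB2, ∞)` both `α ↦ α³ - α² αBB2 = α² (α - αBB2)` and `α ↦ α - αBB1` are strictly
increasing, and `ψ(τ, ·)` combines them with the nonnegative weights `(1 - τ) yᵀy` and `τ sᵀy`,
which are not both zero. So `ψ(τ, ·)` is strictly increasing there, hence has at most one root. -/

open Finset Set

theorem sum_mul_self_pos_of_sum_mul_pos {ι : Type*} [Fintype ι] {s y : ι → ℝ}
    (hsy : 0 < ∑ i, s i * y i) : 0 < ∑ i, y i * y i := by
  have hcs : (∑ i, s i * y i) ^ 2 ≤ (∑ i, s i * s i) * ∑ i, y i * y i := by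
    simpa only [sq] using sum_mul_sq_le_sq_mul_sq univ s y
  exact pos_of_mul_pos_right ((pow_pos hsy 2).trans_le hcs)
    (sum_nonneg fun i _ => mul_self_nonneg (s i))

theorem strictMonoOn_pow_three_sub_sq_mul {c : ℝ} (hc : 0 ≤ c) :
    StrictMonoOn (fun α : ℝ => α ^ 3 - α ^ 2 * c) (Ici c) := by
  intro α hα β hβ hαβ
  have hsq : α ^ 2 ≤ β ^ 2 := pow_le_pow_left₀ (hc.trans hα) hαβ.le 2
  have hβ_pos : 0 < β ^ 2 := pow_pos (hc.trans_lt (lt_of_le_of_lt hα hαβ)) 2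
  calc α ^ 3 - α ^ 2 * c = α ^ 2 * (α - c) := by ring
    _ ≤ β ^ 2 * (α - c) := mul_le_mul_of_nonneg_right hsq (sub_nonneg.2 hα)
    _ < β ^ 2 * (β - c) := mul_lt_mul_of_pos_left (by linarith) hβ_pos
    _ = β ^ 3 - β ^ 2 * c := by ring

theorem StrictMonoOn.mul_add_mul {s : Set ℝ} {f g : ℝ → ℝ} {a b : ℝ}
    (hf : StrictMonoOn f s) (hg : StrictMonoOn g s) (ha : 0 ≤ a) (hb : 0 ≤ b)
    (hab : 0 < a + b) : StrictMonoOn (fun x => a * f x + b * g x) s := by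
  intro x hx x' hx' hxx'
  have hfx := hf hx hx' hxx'
  have hgx := hg hx hx' hxx'
  rcases ha.lt_or_eq with ha | rfl
  · nlinarith [mul_lt_mul_of_pos_left hfx ha, mul_le_mul_of_nonneg_left hgx.le hb]
  · simpa using mul_lt_mul_of_pos_left hgx (by linarith : 0 < b)

theorem stmt_1_general (n : ℕ) (s y : Fin n → ℝ)
    (hsy : 0 < ∑ i, s i * y i)
    (aBB1 aBB2 : ℝ)
    (h2 : aBB2 = (∑ i, s i * y i) / (∑ i, y i * y i))
    (ψ : ℝ → ℝ → ℝ)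
    (hψ : ∀ τ α : ℝ, ψ τ α =
      (1 - τ) * (∑ i, y i * y i) * (α ^ 3 - α ^ 2 * aBB2)
        + τ * (∑ i, s i * y i) * (α - aBB1))
    (τ : ℝ) (hτ : τ ∈ Set.Icc (0 : ℝ) 1)
    (α₁ α₂ : ℝ)
    (hα₁ : α₁ ∈ Set.Icc aBB2 aBB1) (hα₂ : α₂ ∈ Set.Icc aBB2 aBB1)
    (hr₁ : ψ τ α₁ = 0) (hr₂ : ψ τ α₂ = 0) :
    α₁ = α₂ := by
  have hy := sum_mul_self_pos_of_sum_mul_pos hsy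
  have haBB2 : 0 ≤ aBB2 := h2 ▸ by positivity
  have hmono : StrictMonoOn (ψ τ) (Ici aBB2) := by
    rw [show ψ τ = _ from funext (hψ τ)]
    refine (strictMonoOn_pow_three_sub_sq_mul haBB2).mul_add_mul
      (fun _ _ _ _ h => sub_lt_sub_right h aBB1)
      (mul_nonneg (sub_nonneg.2 hτ.2) hy.le) (mul_nonneg hτ.1 hsy.le) ?_
    rcases hτ.2.lt_or_eq with hτ1 | rfl
    · linarith [mul_pos (sub_pos.2 hτ1) hy, mul_nonneg hτ.1 hsy.le]
    · simpa using hsy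
  exact hmono.injOn hα₁.1 hα₂.1 (hr₁.trans hr₂.symm)

theorem stmt_1 (n : ℕ) (hn : 1 ≤ n) (s y : Fin n → ℝ)
    (hsy : 0 < ∑ i, s i * y i)
    (aBB1 aBB2 : ℝ)
    (h1 : aBB1 = (∑ i, s i * s i) / (∑ i, s i * y i))
    (h2 : aBB2 = (∑ i, s i * y i) / (∑ i, y i * y i))
    (ψ : ℝ → ℝ → ℝ)
    (hψ : ∀ τ α : ℝ, ψ τ α =
      (1 - τ) * (∑ i, y i * y i) * (α ^ 3 - α ^ 2 * aBB2)
        + τ * (∑ i, s i * y i) * (α - aBB1))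
    (τ : ℝ) (hτ : τ ∈ Set.Icc (0 : ℝ) 1)
    (α₁ α₂ : ℝ)
    (hα₁ : α₁ ∈ Set.Icc aBB2 aBB1) (hα₂ : α₂ ∈ Set.Icc aBB2 aBB1)
    (hr₁ : ψ τ α₁ = 0) (hr₂ : ψ τ α₂ = 0) :
    α₁ = α₂ :=
  stmt_1_general n s y hsy aBB1 aBB2 h2 ψ hψ τ hτ α₁ α₂ hα₁ hα₂ hr₁ hr₂
end

section
/- Let n ≥ 1 and let s, y ∈ ℝⁿ satisfy sᵀy > 0, and let τ ∈ [0,1]. Define φ_τ(α) = ‖τ(α⁻¹ s − y) + (1−τ)(s − α y)‖² for α ≠ 0, where ‖·‖ is the Euclidean norm. Then for every α > 0, the derivative of φ_τ at α equals (2(τ + (1−τ)α)/α³)·ψ(τ, α). In particular, for α > 0, φ_τ′(α) = 0 if and only if ψ(τ, α) = 0. -/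
open RealInnerProductSpace

/-! With `c(α) = τ + (1 - τ) α`, the residual vector factors as `c(α) • (α⁻¹ • s - y)`, so
`φ_τ(α) = c(α)² (sᵀs - 2α sᵀy + α² yᵀy) / α²`. Differentiating, the identity
`c'(α) α - c(α) = -τ` collapses the derivative to `2 c(α) / α³` times the cubic `ψ(τ, α)`, and the
prefactor is positive for `α > 0` and `τ ∈ [0, 1]`. -/

lemma smul_inv_smul_sub_add_smul_sub_smul {E : Type*} [AddCommGroup E] [Module ℝ E]
    (s y : E) (τ : ℝ) {α : ℝ} (hα : α ≠ 0) :
    τ • (α⁻¹ • s - y) + (1 - τ) • (s - α • y) = (τ + (1 - τ) * α) • (α⁻¹ • s - y) := by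
  match_scalars
  · field_simp
  · ring

lemma norm_inv_smul_sub_sq {E : Type*} [NormedAddCommGroup E] [InnerProductSpace ℝ E]
    (s y : E) {α : ℝ} (hα : α ≠ 0) :
    ‖α⁻¹ • s - y‖ ^ 2 = (⟪s, s⟫ - 2 * α * ⟪s, y⟫ + α ^ 2 * ⟪y, y⟫) / α ^ 2 := by
  rw [← real_inner_self_eq_norm_sq]
  simp only [inner_sub_left, inner_sub_right, real_inner_smul_left, real_inner_smul_right,
    real_inner_comm y s]
  field_simp
  ring

lemma hasDerivAt_mul_sq_mul_quadratic_div_sq (τ S P Y : ℝ) {α : ℝ} (hα : α ≠ 0) :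
    HasDerivAt (fun x => (τ + (1 - τ) * x) ^ 2 * ((S - 2 * x * P + x ^ 2 * Y) / x ^ 2))
      (2 * (τ + (1 - τ) * α) / α ^ 3 *
        ((1 - τ) * Y * α ^ 3 - (1 - τ) * P * α ^ 2 + τ * P * α - τ * S)) α := by
  have hc : HasDerivAt (fun x => τ + (1 - τ) * x) (1 - τ) α := by
    simpa using ((hasDerivAt_id α).const_mul (1 - τ)).const_add τ
  have hq : HasDerivAt (fun x => S - 2 * x * P + x ^ 2 * Y) (-2 * P + 2 * α * Y) α := by
    refine ((((hasDerivAt_id' α).const_mul 2).mul_const P).const_sub S).fun_add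
      ((hasDerivAt_pow 2 α).mul_const Y) |>.congr_deriv ?_
    norm_num
  refine ((hc.fun_pow 2).fun_mul (hq.fun_div (hasDerivAt_pow 2 α) (pow_ne_zero 2 hα))).congr_deriv ?_
  field_simp
  ring

lemma bb_psi_eq_cubic {τ α S P Y : ℝ} (hP : P ≠ 0) (hY : Y ≠ 0) :
    (1 - τ) * Y * (α ^ 3 - α ^ 2 * (P / Y)) + τ * P * (α - S / P)
      = (1 - τ) * Y * α ^ 3 - (1 - τ) * P * α ^ 2 + τ * P * α - τ * S := by
  field_simp
  ring

theorem stmt_3_general (n : ℕ) (s y : EuclideanSpace ℝ (Fin n))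
    (hsy : 0 < (@inner ℝ _ _ s y))
    (aBB1 aBB2 : ℝ)
    (h1 : aBB1 = (@inner ℝ _ _ s s) / (@inner ℝ _ _ s y))
    (h2 : aBB2 = (@inner ℝ _ _ s y) / (@inner ℝ _ _ y y))
    (ψ : ℝ → ℝ → ℝ)
    (hψ : ∀ τ α : ℝ, ψ τ α =
      (1 - τ) * (@inner ℝ _ _ y y) * (α ^ 3 - α ^ 2 * aBB2)
        + τ * (@inner ℝ _ _ s y) * (α - aBB1))
    (τ : ℝ) (hτ : τ ∈ Set.Icc (0 : ℝ) 1)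
    (φ : ℝ → ℝ)
    (hφ : ∀ α : ℝ, α ≠ 0 →
      φ α = ‖τ • (α⁻¹ • s - y) + (1 - τ) • (s - α • y)‖ ^ 2) :
    ∀ α : ℝ, 0 < α →
      HasDerivAt φ ((2 * (τ + (1 - τ) * α) / α ^ 3) * ψ τ α) α ∧
      (deriv φ α = 0 ↔ ψ τ α = 0) := by
  intro α hα
  have hy : ⟪y, y⟫ ≠ 0 := by
    rintro hyy
    rw [inner_self_eq_zero.mp hyy, inner_zero_right] at hsy
    exact hsy.false
  have hφ_eq : φ =ᶠ[nhds α] fun x =>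
      (τ + (1 - τ) * x) ^ 2 * ((⟪s, s⟫ - 2 * x * ⟪s, y⟫ + x ^ 2 * ⟪y, y⟫) / x ^ 2) := by
    filter_upwards [eventually_ne_nhds hα.ne'] with x hx
    rw [hφ x hx, smul_inv_smul_sub_add_smul_sub_smul s y τ hx, norm_smul, mul_pow,
      Real.norm_eq_abs, sq_abs, norm_inv_smul_sub_sq s y hx]
  have hderiv : HasDerivAt φ ((2 * (τ + (1 - τ) * α) / α ^ 3) * ψ τ α) α := by
    rw [hψ, h1, h2, bb_psi_eq_cubic hsy.ne' hy]
    exact (hasDerivAt_mul_sq_mul_quadratic_div_sq τ _ _ _ hα.ne').congr_of_eventuallyEq hφ_eq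
  have hc : 0 < τ + (1 - τ) * α := by
    rcases hτ.1.eq_or_lt with rfl | hτ0
    · simpa using hα
    · nlinarith [hτ.2]
  refine ⟨hderiv, ?_⟩
  rw [hderiv.deriv, mul_eq_zero, or_iff_right (by positivity)]

theorem stmt_3 (n : ℕ) (hn : 1 ≤ n) (s y : EuclideanSpace ℝ (Fin n))
    (hsy : 0 < (@inner ℝ _ _ s y))
    (aBB1 aBB2 : ℝ)
    (h1 : aBB1 = (@inner ℝ _ _ s s) / (@inner ℝ _ _ s y))
    (h2 : aBB2 = (@inner ℝ _ _ s y) / (@inner ℝ _ _ y y))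
    (ψ : ℝ → ℝ → ℝ)
    (hψ : ∀ τ α : ℝ, ψ τ α =
      (1 - τ) * (@inner ℝ _ _ y y) * (α ^ 3 - α ^ 2 * aBB2)
        + τ * (@inner ℝ _ _ s y) * (α - aBB1))
    (τ : ℝ) (hτ : τ ∈ Set.Icc (0 : ℝ) 1)
    (φ : ℝ → ℝ)
    (hφ : ∀ α : ℝ, α ≠ 0 →
      φ α = ‖τ • (α⁻¹ • s - y) + (1 - τ) • (s - α • y)‖ ^ 2) :
    ∀ α : ℝ, 0 < α →
      HasDerivAt φ ((2 * (τ + (1 - τ) * α) / α ^ 3) * ψ τ α) α ∧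
      (deriv φ α = 0 ↔ ψ τ α = 0) :=
  stmt_3_general n s y hsy aBB1 aBB2 h1 h2 ψ hψ τ hτ φ hφ
end

section
/- Let n ≥ 1 and let s, y ∈ ℝⁿ satisfy sᵀy > 0. For γ ∈ (0,1) let α_γ = γ·αBB1 + (1−γ)·αBB2 and let τ̃ = γ·α_γ² / (γ·α_γ² + (1−γ)·αBB2). Then τ̃ ∈ (0,1) and ψ(τ̃, α_γ) = 0; i.e., every convex combination of the two BB stepsizes is a stationary point of the least-squares merit function φ_{τ̃}(α) = ‖τ̃(α⁻¹s − y) + (1−τ̃)(s − αy)‖² for some τ̃ ∈ (0,1). -/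
/-
Writing P = sᵀy, Y = yᵀy, so that Y·αBB2 = P, and D = γ·α_γ² + (1−γ)·αBB2, one has
1 − τ̃ = (1−γ)·αBB2 / D, hence
  D·ψ(τ̃, α_γ) = α_γ²·P·((1−γ)(α_γ − αBB2) + γ(α_γ − αBB1)) = α_γ²·P·(α_γ − α_γ) = 0.
τ̃ has the form p/(p+q) with p, q > 0 because sᵀy > 0 makes both BB stepsizes, hence α_γ, positive.
-/

lemma sum_mul_self_pos_of_sum_mul_ne_zero {ι : Type*} [Fintype ι] {s y : ι → ℝ}
    (h : ∑ i, s i * y i ≠ 0) : 0 < ∑ i, y i * y i := by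
  refine (Finset.sum_nonneg fun i _ => mul_self_nonneg (y i)).lt_of_ne fun h0 => h ?_
  have hy : ∀ i ∈ Finset.univ, y i = 0 := (Finset.sum_mul_self_eq_zero_iff _ _).mp h0.symm
  exact Finset.sum_eq_zero fun i hi => by rw [hy i hi, mul_zero]

lemma div_add_mem_Ioo {p q : ℝ} (hp : 0 < p) (hq : 0 < q) : p / (p + q) ∈ Set.Ioo 0 1 :=
  ⟨by positivity, (div_lt_one (by positivity)).mpr (by linarith)⟩

lemma weighted_stationarity_eq_zero {P Y b₁ b₂ γ a τ : ℝ} (hY : Y * b₂ = P)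
    (ha : a = γ * b₁ + (1 - γ) * b₂) (hτ : τ = γ * a ^ 2 / (γ * a ^ 2 + (1 - γ) * b₂))
    (hD : γ * a ^ 2 + (1 - γ) * b₂ ≠ 0) :
    (1 - τ) * Y * (a ^ 3 - a ^ 2 * b₂) + τ * P * (a - b₁) = 0 := by
  subst hY hτ ha
  field_simp
  ring

theorem stmt_4_general (n : ℕ) (s y : Fin n → ℝ)
    (hsy : 0 < ∑ i, s i * y i)
    (aBB1 aBB2 : ℝ)
    (h1 : aBB1 = (∑ i, s i * s i) / (∑ i, s i * y i))
    (h2 : aBB2 = (∑ i, s i * y i) / (∑ i, y i * y i))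
    (ψ : ℝ → ℝ → ℝ)
    (hψ : ∀ τ α : ℝ, ψ τ α =
      (1 - τ) * (∑ i, y i * y i) * (α ^ 3 - α ^ 2 * aBB2)
        + τ * (∑ i, s i * y i) * (α - aBB1))
    (γ : ℝ) (hγ : γ ∈ Set.Ioo (0 : ℝ) 1)
    (a τt : ℝ)
    (ha : a = γ * aBB1 + (1 - γ) * aBB2)
    (hτt : τt = γ * a ^ 2 / (γ * a ^ 2 + (1 - γ) * aBB2)) :
    τt ∈ Set.Ioo (0 : ℝ) 1 ∧ ψ τt a = 0 := by
  obtain ⟨hγ0, hγ1⟩ := hγ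
  have hY : 0 < ∑ i, y i * y i := sum_mul_self_pos_of_sum_mul_ne_zero hsy.ne'
  have hS : 0 < ∑ i, s i * s i := by
    refine sum_mul_self_pos_of_sum_mul_ne_zero (y := s) (s := y) ?_
    simpa only [mul_comm] using hsy.ne'
  have hBB1 : 0 < aBB1 := h1 ▸ div_pos hS hsy
  have hBB2 : 0 < aBB2 := h2 ▸ div_pos hsy hY
  have hτ_num : 0 < γ * a ^ 2 := by
    have : 0 < a := ha ▸ by nlinarith
    positivity
  have hτ_den : 0 < (1 - γ) * aBB2 := mul_pos (by linarith) hBB2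
  have hYB : (∑ i, y i * y i) * aBB2 = ∑ i, s i * y i := by
    rw [h2, mul_div_cancel₀ _ hY.ne']
  refine ⟨hτt ▸ div_add_mem_Ioo hτ_num hτ_den, ?_⟩
  rw [hψ]
  exact weighted_stationarity_eq_zero hYB ha hτt (by positivity)

theorem stmt_4 (n : ℕ) (hn : 1 ≤ n) (s y : Fin n → ℝ)
    (hsy : 0 < ∑ i, s i * y i)
    (aBB1 aBB2 : ℝ)
    (h1 : aBB1 = (∑ i, s i * s i) / (∑ i, s i * y i))
    (h2 : aBB2 = (∑ i, s i * y i) / (∑ i, y i * y i))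
    (ψ : ℝ → ℝ → ℝ)
    (hψ : ∀ τ α : ℝ, ψ τ α =
      (1 - τ) * (∑ i, y i * y i) * (α ^ 3 - α ^ 2 * aBB2)
        + τ * (∑ i, s i * y i) * (α - aBB1))
    (γ : ℝ) (hγ : γ ∈ Set.Ioo (0 : ℝ) 1)
    (a τt : ℝ)
    (ha : a = γ * aBB1 + (1 - γ) * aBB2)
    (hτt : τt = γ * a ^ 2 / (γ * a ^ 2 + (1 - γ) * aBB2)) :
    τt ∈ Set.Ioo (0 : ℝ) 1 ∧ ψ τt a = 0 :=
  stmt_4_general n s y hsy aBB1 aBB2 h1 h2 ψ hψ γ hγ a τt ha hτt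
end

section
/- In the two-dimensional setting, for every k ≥ 2 one has q_{k+1} = h_{γ_k}(q_{k−1})² · q_k / q_{k−1}², where h_γ(w) = (γ(λ² + w) + (1−γ)λ(λ + w)) / (γ(λ² + w) + (1−γ)(λ + w)). -/
/-! The step size α is a rational function of w = q_{k-1}, and clearing denominators gives
1 - α = (λ - 1) N₁ / D and 1 - λα = (1 - λ) w N₂ / D with D = (λ + w)(λ² + w), where
h_γ(w) = N₁ / N₂. Since q_{k+1} = ((1 - α)/(1 - λα))² q_k, the common D and the factor
λ - 1 cancel and leave h_γ(w)² q_k / w². -/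

namespace TwoDimStep

/-- The step size `α_k`, as a function of `w = q_{k-1}`. -/
noncomputable def stepSize (lam γ w : ℝ) : ℝ :=
  γ * (1 + w) / (lam + w) + (1 - γ) * (lam + w) / (lam ^ 2 + w)

/-- The paper's `h_γ(w)`. -/
noncomputable def ratio (lam γ w : ℝ) : ℝ :=
  (γ * (lam ^ 2 + w) + (1 - γ) * lam * (lam + w)) / (γ * (lam ^ 2 + w) + (1 - γ) * (lam + w))

variable {lam γ w : ℝ}

theorem one_sub_stepSize (h₁ : lam + w ≠ 0) (h₂ : lam ^ 2 + w ≠ 0) :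
    1 - stepSize lam γ w = (lam - 1) * (γ * (lam ^ 2 + w) + (1 - γ) * lam * (lam + w)) /
      ((lam + w) * (lam ^ 2 + w)) := by
  unfold stepSize
  field_simp
  ring

theorem one_sub_mul_stepSize (h₁ : lam + w ≠ 0) (h₂ : lam ^ 2 + w ≠ 0) :
    1 - lam * stepSize lam γ w = (lam - 1) * (-w * (γ * (lam ^ 2 + w) + (1 - γ) * (lam + w))) /
      ((lam + w) * (lam ^ 2 + w)) := by
  unfold stepSize
  field_simp
  ring

theorem one_sub_stepSize_div_one_sub_mul (hlam : lam ≠ 1) (h₁ : lam + w ≠ 0)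
    (h₂ : lam ^ 2 + w ≠ 0) :
    (1 - stepSize lam γ w) / (1 - lam * stepSize lam γ w) = -(ratio lam γ w / w) := by
  rw [one_sub_stepSize h₁ h₂, one_sub_mul_stepSize h₁ h₂,
    div_div_div_cancel_right₀ (mul_ne_zero h₁ h₂), mul_div_mul_left _ _ (sub_ne_zero.2 hlam),
    neg_mul, div_neg, mul_comm w, ← div_div, ratio]

end TwoDimStep

open TwoDimStep in
theorem stmt_7_general (lam : ℝ) (hlam : 1 < lam)
    (γ : ℕ → ℝ)
    (g1 g2 : ℕ → ℝ)
    (q : ℕ → ℝ) (hq : ∀ j, q j = (g1 j) ^ 2 / (g2 j) ^ 2)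
    (α : ℕ → ℝ)
    (hα : ∀ k, 2 ≤ k → α k =
      γ k * (1 + q (k - 1)) / (lam + q (k - 1)) +
        (1 - γ k) * (lam + q (k - 1)) / (lam ^ 2 + q (k - 1)))
    (hup1 : ∀ k, 2 ≤ k → g1 (k + 1) = (1 - α k) * g1 k)
    (hup2 : ∀ k, 2 ≤ k → g2 (k + 1) = (1 - lam * α k) * g2 k) :
    ∀ k, 2 ≤ k →
      q (k + 1) =
        ((γ k * (lam ^ 2 + q (k - 1)) + (1 - γ k) * lam * (lam + q (k - 1))) /
            (γ k * (lam ^ 2 + q (k - 1)) + (1 - γ k) * (lam + q (k - 1)))) ^ 2 *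
          q k / (q (k - 1)) ^ 2 := by
  intro k hk
  have hw : 0 ≤ q (k - 1) := by rw [hq]; positivity
  have hα' : α k = stepSize lam (γ k) (q (k - 1)) := hα k hk
  calc q (k + 1) = ((1 - α k) / (1 - lam * α k)) ^ 2 * q k := by
        rw [hq, hq, hup1 k hk, hup2 k hk, mul_pow, mul_pow, div_pow, div_mul_div_comm]
    _ = _ := by
        rw [hα', one_sub_stepSize_div_one_sub_mul hlam.ne' (by positivity) (by positivity), ratio]
        ring

theorem stmt_7 (lam : ℝ) (hlam : 1 < lam)
    (γ : ℕ → ℝ) (hγ : ∀ k, 2 ≤ k → γ k ∈ Set.Icc (0 : ℝ) 1)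
    (g1 g2 : ℕ → ℝ)
    (hg11 : g1 1 ≠ 0) (hg21 : g2 1 ≠ 0) (hg12 : g1 2 ≠ 0) (hg22 : g2 2 ≠ 0)
    (q : ℕ → ℝ) (hq : ∀ j, q j = (g1 j) ^ 2 / (g2 j) ^ 2)
    (α : ℕ → ℝ)
    (hα : ∀ k, 2 ≤ k → α k =
      γ k * (1 + q (k - 1)) / (lam + q (k - 1)) +
        (1 - γ k) * (lam + q (k - 1)) / (lam ^ 2 + q (k - 1)))
    (hup1 : ∀ k, 2 ≤ k → g1 (k + 1) = (1 - α k) * g1 k)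
    (hup2 : ∀ k, 2 ≤ k → g2 (k + 1) = (1 - lam * α k) * g2 k) :
    ∀ k, 2 ≤ k →
      q (k + 1) =
        ((γ k * (lam ^ 2 + q (k - 1)) + (1 - γ k) * lam * (lam + q (k - 1))) /
            (γ k * (lam ^ 2 + q (k - 1)) + (1 - γ k) * (lam + q (k - 1)))) ^ 2 *
          q k / (q (k - 1)) ^ 2 :=
  stmt_7_general lam hlam γ g1 g2 q hq α hα hup1 hup2
end

section
/- Let λ > 1, c₁ = 2 log λ, and θ = (1 + √7 i)/2 ∈ ℂ. Let M : ℕ → ℝ and r : ℕ → ℝ satisfy M_{k+1} = M_k − 2M_{k−1} + 2 r_k and 0 < r_k < log λ for all k ≥ 2, and define ξ_k = M_k + (θ − 1)M_{k−1} ∈ ℂ for k ≥ 2. If |ξ₂| > 8 log λ, then |ξ_k| ≥ (√2 − 1)·2^{k/2}·c₁ for all k ≥ 2. -/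
open Complex

/-!
With `ξₖ = Mₖ + (θ - 1) Mₖ₋₁`, the second-order recurrence for `M` becomes the first-order
recurrence `ξₖ₊₁ = θ ξₖ + 2 rₖ`, because `θ² = θ - 2`. As `|θ| = √2` and `0 < 2 rₖ < c₁`, this gives
`|ξₖ₊₁| ≥ √2 |ξₖ| - c₁`, so `|ξₖ| - (√2 + 1) c₁` (the shift by the fixed point of
`x ↦ √2 x - c₁`) grows at least by the factor `√2` per step; the bound on `|ξ₂|` makes its
initial value at least `2 (√2 - 1) c₁`.
-/

theorem pow_mul_sub_le_sub_of_mul_sub_le {a : ℕ → ℝ} {q c d : ℝ} (hq : 0 ≤ q)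
    (hd : q * d - c = d) {n : ℕ} (h : ∀ k ≥ n, q * a k - c ≤ a (k + 1)) :
    ∀ k ≥ n, q ^ (k - n) * (a n - d) ≤ a k - d := by
  intro k hk
  obtain ⟨j, rfl⟩ := Nat.exists_eq_add_of_le hk
  have hgeom := geom_le (u := fun i => a (n + i) - d) hq j fun i _ => by
    have := h (n + i) (Nat.le_add_right n i)
    simp only [← add_assoc]
    linarith
  simpa using hgeom

theorem theta_sq_sub_theta_add_two :
    ((1 + Real.sqrt 7 * I) / 2) ^ 2 - (1 + Real.sqrt 7 * I) / 2 + 2 = 0 := by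
  have h7 : ((Real.sqrt 7 : ℝ) : ℂ) ^ 2 = 7 := by
    norm_cast
    exact Real.sq_sqrt (by norm_num)
  linear_combination (I ^ 2 / 4) * h7 + (7 / 4 : ℂ) * I_sq

theorem norm_theta : ‖(1 + Real.sqrt 7 * I) / 2‖ = Real.sqrt 2 := by
  rw [← Real.sqrt_sq (norm_nonneg _), Complex.sq_norm, normSq_apply]
  congr 1
  simp only [div_ofNat_re, add_re, one_re, mul_re, ofReal_re, I_re, mul_zero, ofReal_im, I_im,
    mul_one, sub_self, add_zero, one_div, div_ofNat_im, add_im, one_im, mul_im, zero_add]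
  nlinarith [Real.sq_sqrt (by norm_num : (0 : ℝ) ≤ 7)]

theorem add_sub_one_mul_eq_mul_add {θ : ℂ} (hθ : θ ^ 2 - θ + 2 = 0) {m₀ m₁ m₂ s : ℝ}
    (hm : m₂ = m₁ - 2 * m₀ + 2 * s) :
    (m₂ : ℂ) + (θ - 1) * m₁ = θ * (m₁ + (θ - 1) * m₀) + 2 * s := by
  rw [hm]
  push_cast
  linear_combination -(m₀ : ℂ) * hθ

theorem norm_mul_norm_sub_le_norm_mul_add {α : Type*} [NormedDivisionRing α] (θ x w : α) :
    ‖θ‖ * ‖x‖ - ‖w‖ ≤ ‖θ * x + w‖ := by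
  have h := norm_sub_le (θ * x + w) w
  rw [add_sub_cancel_right, norm_mul] at h
  linarith

theorem stmt_9 (lam : ℝ) (hlam : 1 < lam)
    (c1 : ℝ) (hc1 : c1 = 2 * Real.log lam)
    (θ : ℂ) (hθ : θ = (1 + Real.sqrt 7 * Complex.I) / 2)
    (M r : ℕ → ℝ)
    (hM : ∀ k, 2 ≤ k → M (k + 1) = M k - 2 * M (k - 1) + 2 * r k)
    (hr : ∀ k, 2 ≤ k → 0 < r k ∧ r k < Real.log lam)
    (ξ : ℕ → ℂ)
    (hξ : ∀ k, 2 ≤ k → ξ k = (M k : ℂ) + (θ - 1) * (M (k - 1) : ℂ))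
    (hξ2 : 8 * Real.log lam < ‖ξ 2‖) :
    ∀ k : ℕ, 2 ≤ k →
      (Real.sqrt 2 - 1) * (2 : ℝ) ^ ((k : ℝ) / 2) * c1 ≤ ‖ξ k‖ := by
  have hlog : 0 < Real.log lam := Real.log_pos hlam
  have hsq : Real.sqrt 2 ^ 2 = 2 := Real.sq_sqrt zero_le_two
  have hsqrt_lt : Real.sqrt 2 < 3 / 2 := by nlinarith [Real.sqrt_nonneg 2]
  have hθnorm : ‖θ‖ = Real.sqrt 2 := hθ ▸ norm_theta
  have hstep : ∀ k ≥ 2, Real.sqrt 2 * ‖ξ k‖ - c1 ≤ ‖ξ (k + 1)‖ := by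
    intro k hk
    have hrec : ξ (k + 1) = θ * ξ k + 2 * r k := by
      rw [hξ (k + 1) (by omega), hξ k hk, Nat.add_sub_cancel]
      exact add_sub_one_mul_eq_mul_add (hθ ▸ theta_sq_sub_theta_add_two) (hM k hk)
    have hr_norm : ‖(2 * r k : ℂ)‖ ≤ c1 := by
      rw [norm_mul, Complex.norm_real, Real.norm_of_nonneg (hr k hk).1.le]
      simp only [Complex.norm_ofNat]
      linarith [(hr k hk).2]
    have h := norm_mul_norm_sub_le_norm_mul_add θ (ξ k) (2 * r k)
    rw [hθnorm] at h
    rw [hrec]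
    linarith
  have hgrowth := pow_mul_sub_le_sub_of_mul_sub_le (a := fun k => ‖ξ k‖)
    (d := (Real.sqrt 2 + 1) * c1) (Real.sqrt_nonneg 2) (by linear_combination c1 * hsq) hstep
  have hbase : 2 * ((Real.sqrt 2 - 1) * c1) ≤ ‖ξ 2‖ - (Real.sqrt 2 + 1) * c1 := by
    rw [hc1]
    nlinarith
  intro k hk
  obtain ⟨j, rfl⟩ : ∃ j, k = j + 2 := ⟨k - 2, by omega⟩
  have hj := hgrowth (j + 2) hk
  simp only [Nat.add_sub_cancel] at hj
  rw [Real.rpow_div_two_eq_sqrt _ zero_le_two, Real.rpow_natCast, pow_add, hsq]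
  nlinarith [mul_le_mul_of_nonneg_left hbase (pow_nonneg (Real.sqrt_nonneg 2) j),
    Real.sqrt_nonneg 2]
end

section
/- Let λ > 1, c₁ = 2 log λ, and θ = (1 + √7 i)/2 ∈ ℂ. Let M : ℕ → ℝ and r : ℕ → ℝ satisfy M_{k+1} = M_k − 2M_{k−1} + 2 r_k and 0 < r_k < log λ for all k ≥ 2, and define ξ_k = M_k + (θ − 1)M_{k−1} ∈ ℂ for k ≥ 2. If |ξ₂| > 8 log λ, then for every k ≥ 2, max{|M_k|, |M_{k−1}|} ≥ (√2 − 1)²·2^{k/2}·c₁. -/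
/-!
Writing `ξₖ = Mₖ + (θ - 1) Mₖ₋₁`, the identity `θ (θ - 1) = -2` turns the recurrence for `M` into
`ξₖ₊₁ = θ ξₖ + 2 rₖ`. Since `|θ| = √2` and `0 < 2 rₖ < c₁`, the excess of `|ξₖ|` over the
repelling level `B = (√2 + 1) c₁` is multiplied by at least `√2` at each step, and the assumption
on `|ξ₂|` makes it start above `2 (√2 - 1) c₁`. Finally `|ξₖ| ≤ (1 + √2) max (|Mₖ|, |Mₖ₋₁|)`.
-/

open Complex ComplexConjugate

lemma add_sub_one_mul_eq_mul_add_s10 {R : Type*} [CommRing R] {θ a b c s : R}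
    (hθ : θ * (θ - 1) = -2) (h : c = b - 2 * a + 2 * s) :
    c + (θ - 1) * b = θ * (b + (θ - 1) * a) + 2 * s := by
  rw [h]
  linear_combination (-a) * hθ

section Theta

variable {θ : ℂ}

lemma mul_sub_one_eq_neg_two_of_eq (hθ : θ = (1 + Real.sqrt 7 * I) / 2) :
    θ * (θ - 1) = -2 := by
  have h7 : ((Real.sqrt 7 : ℝ) : ℂ) ^ 2 = 7 := by
    norm_cast
    exact Real.sq_sqrt (by norm_num)
  rw [hθ]
  linear_combination (I ^ 2 / 4) * h7 + (7 / 4 : ℂ) * I_sq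

lemma one_sub_eq_conj_of_eq (hθ : θ = (1 + Real.sqrt 7 * I) / 2) : 1 - θ = conj θ := by
  rw [hθ, map_div₀, map_add, map_mul, conj_ofReal, conj_I, map_one, map_ofNat]
  ring

lemma norm_eq_sqrt_two_of_eq (hθ : θ = (1 + Real.sqrt 7 * I) / 2) :
    ‖θ‖ = Real.sqrt 2 := by
  have h : (normSq θ : ℂ) = 2 := by
    rw [← mul_conj, ← one_sub_eq_conj_of_eq hθ]
    linear_combination -mul_sub_one_eq_neg_two_of_eq hθ
  rw [norm_def, show normSq θ = 2 by exact_mod_cast h]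

lemma norm_sub_one_eq_sqrt_two_of_eq (hθ : θ = (1 + Real.sqrt 7 * I) / 2) :
    ‖θ - 1‖ = Real.sqrt 2 := by
  rw [norm_sub_rev, one_sub_eq_conj_of_eq hθ, norm_conj, norm_eq_sqrt_two_of_eq hθ]

end Theta

lemma mul_norm_sub_norm_le_norm_of_eq {K : Type*} [NormedDivisionRing K] {z z' w e : K}
    (h : z' = w * z + e) : ‖w‖ * ‖z‖ - ‖e‖ ≤ ‖z'‖ := by
  calc ‖w‖ * ‖z‖ - ‖e‖ = ‖z' - e‖ - ‖e‖ := by rw [h, add_sub_cancel_right, norm_mul]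
    _ ≤ ‖z'‖ := by linarith [norm_sub_le z' e]

lemma norm_add_mul_le_max_abs_mul {a b : ℝ} (w : ℂ) :
    ‖(a : ℂ) + w * b‖ ≤ max |a| |b| * (1 + ‖w‖) := by
  calc ‖(a : ℂ) + w * b‖ ≤ |a| + ‖w‖ * |b| := by
        simpa only [norm_mul, norm_real, Real.norm_eq_abs] using norm_add_le (a : ℂ) (w * b)
    _ ≤ max |a| |b| + ‖w‖ * max |a| |b| := by
        gcongr
        exacts [le_max_left _ _, le_max_right _ _]
    _ = max |a| |b| * (1 + ‖w‖) := by ring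

lemma pow_mul_sub_le_sub_of_le_succ {x : ℕ → ℝ} {q B : ℝ} {n : ℕ} (hq : 0 ≤ q)
    (h : ∀ k, n ≤ k → q * (x k - B) ≤ x (k + 1) - B) :
    ∀ k, n ≤ k → q ^ (k - n) * (x n - B) ≤ x k - B := by
  intro k hk
  induction k, hk using Nat.le_induction with
  | base => simp
  | succ k hk ih =>
    calc q ^ (k + 1 - n) * (x n - B) = q * (q ^ (k - n) * (x n - B)) := by
          rw [Nat.sub_add_comm hk, pow_succ]; ring
      _ ≤ q * (x k - B) := mul_le_mul_of_nonneg_left ih hq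
      _ ≤ x (k + 1) - B := h k hk

lemma pow_norm_mul_sub_le_norm_sub {K : Type*} [NormedDivisionRing K] {z e : ℕ → K} {w : K}
    {B : ℝ} {n : ℕ} (hz : ∀ k, n ≤ k → z (k + 1) = w * z k + e k)
    (he : ∀ k, n ≤ k → ‖e k‖ ≤ (‖w‖ - 1) * B) :
    ∀ k, n ≤ k → ‖w‖ ^ (k - n) * (‖z n‖ - B) ≤ ‖z k‖ - B :=
  pow_mul_sub_le_sub_of_le_succ (x := fun k ↦ ‖z k‖) (norm_nonneg w) fun k hk ↦ by
    linarith [mul_norm_sub_norm_le_norm_of_eq (hz k hk), he k hk]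

lemma two_rpow_div_two_eq_two_mul_sqrt_two_pow {k : ℕ} (hk : 2 ≤ k) :
    (2 : ℝ) ^ ((k : ℝ) / 2) = 2 * Real.sqrt 2 ^ (k - 2) := by
  rw [Real.rpow_div_two_eq_sqrt _ zero_le_two, Real.rpow_natCast, ← pow_mul_pow_sub _ hk,
    Real.sq_sqrt zero_le_two]

lemma sqrt_two_sub_one_sq_mul_le_of_mul_le {m P c : ℝ}
    (h : P * (2 * (Real.sqrt 2 - 1) * c) ≤ m * (1 + Real.sqrt 2)) :
    (Real.sqrt 2 - 1) ^ 2 * (2 * P) * c ≤ m := by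
  have hs2 : Real.sqrt 2 ^ 2 = 2 := Real.sq_sqrt zero_le_two
  calc (Real.sqrt 2 - 1) ^ 2 * (2 * P) * c
      = (Real.sqrt 2 - 1) * (P * (2 * (Real.sqrt 2 - 1) * c)) := by ring
    _ ≤ (Real.sqrt 2 - 1) * (m * (1 + Real.sqrt 2)) := by
        gcongr
        nlinarith [Real.sqrt_nonneg 2]
    _ = m := by linear_combination m * hs2

theorem stmt_10_general (lam : ℝ)
    (c1 : ℝ) (hc1 : c1 = 2 * Real.log lam)
    (θ : ℂ) (hθ : θ = (1 + Real.sqrt 7 * Complex.I) / 2)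
    (M r : ℕ → ℝ)
    (hM : ∀ k, 2 ≤ k → M (k + 1) = M k - 2 * M (k - 1) + 2 * r k)
    (hr : ∀ k, 2 ≤ k → 0 < r k ∧ r k < Real.log lam)
    (ξ : ℕ → ℂ)
    (hξ : ∀ k, 2 ≤ k → ξ k = (M k : ℂ) + (θ - 1) * (M (k - 1) : ℂ))
    (hξ2 : 8 * Real.log lam < ‖ξ 2‖) :
    ∀ k : ℕ, 2 ≤ k →
      (Real.sqrt 2 - 1) ^ 2 * (2 : ℝ) ^ ((k : ℝ) / 2) * c1 ≤
        max |M k| |M (k - 1)| := by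
  intro k hk
  have hs2 : Real.sqrt 2 ^ 2 = 2 := Real.sq_sqrt zero_le_two
  have hL : 0 < Real.log lam := (hr 2 le_rfl).1.trans (hr 2 le_rfl).2
  have hξ_succ (j : ℕ) (hj : 2 ≤ j) : ξ (j + 1) = θ * ξ j + (2 * r j : ℝ) := by
    rw [hξ j hj, hξ (j + 1) (by omega), Nat.add_sub_cancel]
    push_cast
    exact add_sub_one_mul_eq_mul_add_s10 (mul_sub_one_eq_neg_two_of_eq hθ) (by exact_mod_cast hM j hj)
  have hgrowth := pow_norm_mul_sub_le_norm_sub (B := (Real.sqrt 2 + 1) * c1) hξ_succ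
    (fun j hj ↦ by
      rw [norm_eq_sqrt_two_of_eq hθ, norm_real, Real.norm_of_nonneg (by linarith [hr j hj]),
        show (Real.sqrt 2 - 1) * ((Real.sqrt 2 + 1) * c1) = c1 by linear_combination c1 * hs2, hc1]
      linarith [hr j hj]) k hk
  rw [norm_eq_sqrt_two_of_eq hθ] at hgrowth
  have hupper := norm_add_mul_le_max_abs_mul (a := M k) (b := M (k - 1)) (θ - 1)
  rw [← hξ k hk, norm_sub_one_eq_sqrt_two_of_eq hθ] at hupper
  have hbound : Real.sqrt 2 ^ (k - 2) * (2 * (Real.sqrt 2 - 1) * c1) ≤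
      max |M k| |M (k - 1)| * (1 + Real.sqrt 2) := by
    have hstart : 2 * (Real.sqrt 2 - 1) * c1 ≤ ‖ξ 2‖ - (Real.sqrt 2 + 1) * c1 := by
      rw [hc1]
      nlinarith [Real.sqrt_nonneg 2]
    have hB : 0 ≤ (Real.sqrt 2 + 1) * c1 := by rw [hc1]; positivity
    calc Real.sqrt 2 ^ (k - 2) * (2 * (Real.sqrt 2 - 1) * c1)
        ≤ Real.sqrt 2 ^ (k - 2) * (‖ξ 2‖ - (Real.sqrt 2 + 1) * c1) := by gcongr
      _ ≤ ‖ξ k‖ := by linarith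
      _ ≤ max |M k| |M (k - 1)| * (1 + Real.sqrt 2) := hupper
  rw [two_rpow_div_two_eq_two_mul_sqrt_two_pow hk]
  exact sqrt_two_sub_one_sq_mul_le_of_mul_le hbound

theorem stmt_10 (lam : ℝ) (hlam : 1 < lam)
    (c1 : ℝ) (hc1 : c1 = 2 * Real.log lam)
    (θ : ℂ) (hθ : θ = (1 + Real.sqrt 7 * Complex.I) / 2)
    (M r : ℕ → ℝ)
    (hM : ∀ k, 2 ≤ k → M (k + 1) = M k - 2 * M (k - 1) + 2 * r k)
    (hr : ∀ k, 2 ≤ k → 0 < r k ∧ r k < Real.log lam)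
    (ξ : ℕ → ℂ)
    (hξ : ∀ k, 2 ≤ k → ξ k = (M k : ℂ) + (θ - 1) * (M (k - 1) : ℂ))
    (hξ2 : 8 * Real.log lam < ‖ξ 2‖) :
    ∀ k : ℕ, 2 ≤ k →
      (Real.sqrt 2 - 1) ^ 2 * (2 : ℝ) ^ ((k : ℝ) / 2) * c1 ≤
        max |M k| |M (k - 1)| :=
  stmt_10_general lam c1 hc1 θ hθ M r hM hr ξ hξ hξ2
end

section
/- Let λ > 1, c₁ = 2 log λ, and θ = (1 + √7 i)/2 ∈ ℂ. Let M : ℕ → ℝ and r : ℕ → ℝ satisfy M_{k+1} = M_k − 2M_{k−1} + 2 r_k and 0 < r_k < log λ for all k ≥ 2, and define ξ_k = M_k + (θ − 1)M_{k−1} ∈ ℂ for k ≥ 2. If |ξ₂| > 8 log λ, then for every k ≥ 2: (i) max_{−1 ≤ i ≤ 3} M_{k+i} ≥ (√2 − 1)²·2^{k/2}·c₁ − 2c₁, and (ii) min_{−1 ≤ i ≤ 3} M_{k+i} ≤ −(√2 − 1)²·2^{k/2}·c₁ + 2c₁. -/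
/-!
Write `ξₖ = Mₖ + (θ - 1) Mₖ₋₁`. Since `θ² = θ - 2`, the recurrence becomes
`ξₖ₊₁ = θ ξₖ + 2 rₖ`, and as `|θ| = √2` while `|2 rₖ| < c₁`, the quantity
`|ξₖ| - (√2 + 1) c₁` grows at least by the factor `√2` per step; the hypothesis on `|ξ₂|`
makes it start above `c₁`. On the other hand `Mₖ₋₁ = (2/√7) Im ξₖ`, so up to errors of size
`O(c₁)` the five values `Mₖ₋₁, …, Mₖ₊₃` are `(2/√7) Im (θʲ ξₖ)`, `j = 0, …, 4`. The directions
`θʲ` are spread around the circle well enough that one of these is at least `|ξₖ| / 2` and one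
at most `-|ξₖ| / 2`.
-/

open Complex

noncomputable def theta : ℂ := (1 + Real.sqrt 7 * I) / 2

lemma theta_re : theta.re = 1 / 2 := by simp [theta]

lemma theta_im : theta.im = Real.sqrt 7 / 2 := by simp [theta]

lemma theta_sq : theta ^ 2 = theta - 2 := by
  have h7 : ((Real.sqrt 7 : ℝ) : ℂ) ^ 2 = 7 := by
    exact_mod_cast Real.sq_sqrt (by norm_num : (0 : ℝ) ≤ 7)
  rw [theta]
  linear_combination (7 / 4) * I_sq + (I ^ 2 / 4) * h7

lemma norm_theta_s11 : ‖theta‖ = Real.sqrt 2 := by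
  rw [← Real.sqrt_sq (norm_nonneg theta), ← normSq_eq_norm_sq, normSq_apply, theta_re, theta_im]
  congr 1
  nlinarith [Real.mul_self_sqrt (by norm_num : (0 : ℝ) ≤ 7)]

lemma norm_ofReal_add_theta_sub_one_mul_sq (a b : ℝ) :
    ‖(b : ℂ) + (theta - 1) * a‖ ^ 2 = (b - a / 2) ^ 2 + 7 / 4 * a ^ 2 := by
  rw [← normSq_eq_norm_sq, normSq_apply]
  simp only [add_re, add_im, mul_re, mul_im, sub_re, sub_im, ofReal_re, ofReal_im, one_re, one_im,
    theta_re, theta_im]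
  nlinarith [Real.mul_self_sqrt (by norm_num : (0 : ℝ) ≤ 7)]

lemma ofReal_add_theta_sub_one_mul_step (a b s : ℝ) :
    ((b - 2 * a + s : ℝ) : ℂ) + (theta - 1) * b = theta * ((b : ℂ) + (theta - 1) * a) + s := by
  push_cast
  linear_combination (-a : ℂ) * theta_sq

lemma norm_ofReal_add_theta_sub_one_mul_le {a b m : ℝ} (h₁ : a ≤ m) (h₂ : b ≤ m)
    (h₃ : b - 2 * a ≤ m) (h₄ : -b - 2 * a ≤ m) (h₅ : -3 * b + 2 * a ≤ m) :
    ‖(b : ℂ) + (theta - 1) * a‖ ≤ 2 * m := by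
  have hm : 0 ≤ m := by linarith
  refine (pow_le_pow_iff_left₀ (norm_nonneg _) (by linarith) two_ne_zero).1 ?_
  rw [norm_ofReal_add_theta_sub_one_mul_sq]
  nlinarith [mul_nonneg (sub_nonneg.2 h₁) (sub_nonneg.2 h₂),
    mul_nonneg (sub_nonneg.2 h₃) (sub_nonneg.2 h₄),
    mul_nonneg (sub_nonneg.2 h₄) (sub_nonneg.2 h₅),
    mul_nonneg (sub_nonneg.2 h₁) (sub_nonneg.2 h₅),
    mul_nonneg (sub_nonneg.2 h₂) (sub_nonneg.2 h₃),
    mul_nonneg (sub_nonneg.2 h₂) (sub_nonneg.2 h₅),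
    mul_nonneg (sub_nonneg.2 h₁) (sub_nonneg.2 h₄)]

lemma pow_mul_sub_le_norm_sub_of_eq_mul_add {𝕜 : Type*} [NormedDivisionRing 𝕜] {z : 𝕜}
    (hz : ‖z‖ ≠ 1) {x e : ℕ → 𝕜} {c : ℝ} (hx : ∀ n, x (n + 1) = z * x n + e n)
    (he : ∀ n, ‖e n‖ ≤ c) (n : ℕ) :
    ‖z‖ ^ n * (‖x 0‖ - c / (‖z‖ - 1)) ≤ ‖x n‖ - c / (‖z‖ - 1) := by
  refine geom_le (u := fun k => ‖x k‖ - c / (‖z‖ - 1)) (norm_nonneg z) n fun k _ => ?_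
  have hd : ‖z‖ * (c / (‖z‖ - 1)) = c + c / (‖z‖ - 1) := by
    field_simp [sub_ne_zero.2 hz]
    ring
  have h : ‖z‖ * ‖x k‖ ≤ ‖x (k + 1)‖ + ‖e k‖ :=
    calc ‖z‖ * ‖x k‖ = ‖x (k + 1) - e k‖ := by rw [hx, add_sub_cancel_right, norm_mul]
      _ ≤ ‖x (k + 1)‖ + ‖e k‖ := norm_sub_le _ _
  linarith [he k]

lemma sqrt_two_pow_mul_add_le_norm_of_recurrence {M s : ℕ → ℝ} {c : ℝ}
    (hM : ∀ k, 2 ≤ k → M (k + 1) = M k - 2 * M (k - 1) + s k) (hs : ∀ k, 2 ≤ k → |s k| ≤ c)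
    (h₂ : (Real.sqrt 2 + 2) * c ≤ ‖(M 2 : ℂ) + (theta - 1) * M 1‖) (n : ℕ) :
    Real.sqrt 2 ^ n * c + (Real.sqrt 2 + 1) * c ≤ ‖(M (n + 2) : ℂ) + (theta - 1) * M (n + 1)‖ := by
  have h2 : Real.sqrt 2 * Real.sqrt 2 = 2 := Real.mul_self_sqrt zero_le_two
  have hd : c / (Real.sqrt 2 - 1) = (Real.sqrt 2 + 1) * c := by
    rw [div_eq_iff (by nlinarith)]
    linear_combination (-c) * h2
  have hz : ‖theta‖ ≠ 1 := by rw [norm_theta_s11]; nlinarith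
  have := pow_mul_sub_le_norm_sub_of_eq_mul_add
    (x := fun n => (M (n + 2) : ℂ) + (theta - 1) * M (n + 1)) (e := fun n => (s (n + 2) : ℂ)) hz
    (fun n => by simp only [hM (n + 2) (by omega), ofReal_add_theta_sub_one_mul_step]; rfl)
    (fun n => by simpa only [Complex.norm_real, Real.norm_eq_abs] using hs (n + 2) (by omega)) n
  rw [norm_theta_s11, hd] at this
  have hpow : 0 ≤ Real.sqrt 2 ^ n := by positivity
  nlinarith

lemma exists_mem_Icc_lt_of_norm_lt {M s : ℕ → ℝ} {c T : ℝ} {k : ℕ}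
    (hM : ∀ j ∈ Finset.Icc k (k + 2), M (j + 1) = M j - 2 * M (j - 1) + s j)
    (hs : ∀ j ∈ Finset.Icc k (k + 2), |s j| ≤ c)
    (h : 2 * (T + 3 * c) < ‖(M k : ℂ) + (theta - 1) * M (k - 1)‖) :
    ∃ j ∈ Finset.Icc (k - 1) (k + 3), T < M j := by
  by_contra! hle
  have hMT (j : ℕ) (h₁ : k - 1 ≤ j) (h₂ : j ≤ k + 3) : M j ≤ T := hle j (Finset.mem_Icc.2 ⟨h₁, h₂⟩)
  have mem (i : ℕ) (hi : i ≤ 2) : k + i ∈ Finset.Icc k (k + 2) :=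
    Finset.mem_Icc.2 ⟨by omega, by omega⟩
  have e₀ : M (k + 1) = M k - 2 * M (k - 1) + s k := hM k (mem 0 (by norm_num))
  have e₁ : M (k + 2) = M (k + 1) - 2 * M k + s (k + 1) := hM (k + 1) (mem 1 (by norm_num))
  have e₂ : M (k + 3) = M (k + 2) - 2 * M (k + 1) + s (k + 2) := hM (k + 2) (mem 2 (by norm_num))
  have s₀ := abs_le.1 (hs k (mem 0 (by norm_num)))
  have s₁ := abs_le.1 (hs (k + 1) (mem 1 (by norm_num)))
  have s₂ := abs_le.1 (hs (k + 2) (mem 2 (by norm_num)))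
  have := hMT (k - 1) le_rfl (by omega)
  have := hMT k (by omega) (by omega)
  have := hMT (k + 1) (by omega) (by omega)
  have := hMT (k + 2) (by omega) (by omega)
  have := hMT (k + 3) (by omega) le_rfl
  refine h.not_ge (norm_ofReal_add_theta_sub_one_mul_le ?_ ?_ ?_ ?_ ?_) <;> linarith

lemma exists_mem_Icc_lt_neg_of_norm_lt {M s : ℕ → ℝ} {c T : ℝ} {k : ℕ}
    (hM : ∀ j ∈ Finset.Icc k (k + 2), M (j + 1) = M j - 2 * M (j - 1) + s j)
    (hs : ∀ j ∈ Finset.Icc k (k + 2), |s j| ≤ c)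
    (h : 2 * (T + 3 * c) < ‖(M k : ℂ) + (theta - 1) * M (k - 1)‖) :
    ∃ j ∈ Finset.Icc (k - 1) (k + 3), M j < -T := by
  have hneg : ‖((-M k : ℝ) : ℂ) + (theta - 1) * ((-M (k - 1) : ℝ) : ℂ)‖ =
      ‖(M k : ℂ) + (theta - 1) * M (k - 1)‖ := by
    push_cast
    rw [mul_neg, ← neg_add, norm_neg]
  obtain ⟨j, hj, hlt⟩ := exists_mem_Icc_lt_of_norm_lt (M := fun j => -M j) (s := fun j => -s j)
    (fun j hj => by simp only [hM j hj]; ring) (fun j hj => by simpa only [abs_neg] using hs j hj)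
    (hneg ▸ h)
  exact ⟨j, hj, by linarith⟩

theorem stmt_11 (lam : ℝ) (hlam : 1 < lam)
    (c1 : ℝ) (hc1 : c1 = 2 * Real.log lam)
    (θ : ℂ) (hθ : θ = (1 + Real.sqrt 7 * Complex.I) / 2)
    (M r : ℕ → ℝ)
    (hM : ∀ k, 2 ≤ k → M (k + 1) = M k - 2 * M (k - 1) + 2 * r k)
    (hr : ∀ k, 2 ≤ k → 0 < r k ∧ r k < Real.log lam)
    (ξ : ℕ → ℂ)
    (hξ : ∀ k, 2 ≤ k → ξ k = (M k : ℂ) + (θ - 1) * (M (k - 1) : ℂ))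
    (hξ2 : 8 * Real.log lam < ‖ξ 2‖) :
    ∀ k : ℕ, 2 ≤ k →
      (∃ j ∈ Finset.Icc (k - 1) (k + 3),
        (Real.sqrt 2 - 1) ^ 2 * (2 : ℝ) ^ ((k : ℝ) / 2) * c1 - 2 * c1 ≤ M j) ∧
      (∃ j ∈ Finset.Icc (k - 1) (k + 3),
        M j ≤ -((Real.sqrt 2 - 1) ^ 2 * (2 : ℝ) ^ ((k : ℝ) / 2) * c1) + 2 * c1) := by
  obtain rfl : θ = theta := hθ
  have hc1pos : 0 < c1 := by linarith [Real.log_pos hlam]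
  have hs (k : ℕ) (hk : 2 ≤ k) : |2 * r k| ≤ c1 := by
    rw [abs_of_pos (by linarith [hr k hk])]; linarith [hr k hk]
  have h₁ : 1.4 < Real.sqrt 2 := by rw [Real.lt_sqrt (by norm_num)]; norm_num
  have h₂ : Real.sqrt 2 < 1.5 := by rw [Real.sqrt_lt' (by norm_num)]; norm_num
  intro k hk
  obtain ⟨n, rfl⟩ : ∃ n, k = n + 2 := ⟨k - 2, by omega⟩
  have hgrowth : Real.sqrt 2 ^ n * c1 + (Real.sqrt 2 + 1) * c1 ≤ ‖ξ (n + 2)‖ := by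
    rw [hξ _ hk]
    exact sqrt_two_pow_mul_add_le_norm_of_recurrence hM hs (by rw [← hξ 2 le_rfl]; nlinarith) n
  rw [Real.rpow_div_two_eq_sqrt _ zero_le_two, Real.rpow_natCast, pow_add,
    Real.sq_sqrt zero_le_two]
  set T := (Real.sqrt 2 - 1) ^ 2 * (Real.sqrt 2 ^ n * 2) * c1 - 2 * c1
  have hT : 2 * (T + 3 * c1) < ‖(M (n + 2) : ℂ) + (theta - 1) * M (n + 2 - 1)‖ := by
    have hq : 4 * (Real.sqrt 2 - 1) ^ 2 < 1 := by nlinarith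
    have := mul_lt_mul_of_pos_right hq (by positivity : 0 < Real.sqrt 2 ^ n * c1)
    rw [← hξ _ hk]
    nlinarith
  have hMk (j : ℕ) (hj : j ∈ Finset.Icc (n + 2) (n + 2 + 2)) :=
    hM j (le_trans (by omega) (Finset.mem_Icc.1 hj).1)
  have hsk (j : ℕ) (hj : j ∈ Finset.Icc (n + 2) (n + 2 + 2)) :=
    hs j (le_trans (by omega) (Finset.mem_Icc.1 hj).1)
  obtain ⟨i, hi, hTi⟩ := exists_mem_Icc_lt_of_norm_lt hMk hsk hT
  obtain ⟨j, hj, hjT⟩ := exists_mem_Icc_lt_neg_of_norm_lt hMk hsk hT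
  exact ⟨⟨i, hi, hTi.le⟩, ⟨j, hj, by linarith⟩⟩
end

section
/- In the two-dimensional setting, for every k ≥ 2 one has |g_{k+1}⁽²⁾| ≤ (λ − 1)·q_{k−1}·|g_k⁽²⁾|. -/
/-!
Writing `α = γ A + (1 - γ) B` with `A = (1 + q)/(λ + q)` and `B = (λ + q)/(λ² + q)`, one has
`λ A - 1 = (λ - 1) q / (λ + q)` and `λ B - 1 = (λ - 1) q / (λ² + q)`. Hence `λ α - 1` is `(λ - 1) q`
times a convex combination of `1/(λ + q)` and `1/(λ² + q)`, both in `(0, 1]` since `λ ≥ 1` and `q ≥ 0`.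
So `0 ≤ λ α - 1 ≤ (λ - 1) q`, and the update `g⁽²⁾_{k+1} = (1 - λ α_k) g⁽²⁾_k` gives the bound.
-/

/-- The step size `α_k` as a function of `λ`, `γ_k` and `q = q_{k-1}`. -/
noncomputable def stepSize (lam γ q : ℝ) : ℝ :=
  γ * (1 + q) / (lam + q) + (1 - γ) * (lam + q) / (lam ^ 2 + q)

lemma mul_stepSize_sub_one {lam γ q : ℝ} (h₁ : lam + q ≠ 0) (h₂ : lam ^ 2 + q ≠ 0) :
    lam * stepSize lam γ q - 1 = (lam - 1) * q * (γ / (lam + q) + (1 - γ) / (lam ^ 2 + q)) := by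
  unfold stepSize
  field_simp
  ring

lemma convex_weight_mem_Icc {lam γ q : ℝ} (hlam : 1 ≤ lam) (hq : 0 ≤ q) (hγ : γ ∈ Set.Icc (0 : ℝ) 1) :
    γ / (lam + q) + (1 - γ) / (lam ^ 2 + q) ∈ Set.Icc (0 : ℝ) 1 := by
  obtain ⟨hγ₀, hγ₁⟩ := hγ
  have h₁ : 1 ≤ lam + q := by linarith
  have h₂ : 1 ≤ lam ^ 2 + q := by nlinarith
  have hA : γ / (lam + q) ≤ γ := div_le_self hγ₀ h₁
  have hB : (1 - γ) / (lam ^ 2 + q) ≤ 1 - γ := div_le_self (by linarith) h₂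
  constructor
  · have : 0 ≤ 1 - γ := by linarith
    positivity
  · linarith

lemma abs_one_sub_mul_stepSize_le {lam γ q : ℝ} (hlam : 1 ≤ lam) (hq : 0 ≤ q)
    (hγ : γ ∈ Set.Icc (0 : ℝ) 1) :
    |1 - lam * stepSize lam γ q| ≤ (lam - 1) * q := by
  obtain ⟨hw₀, hw₁⟩ := convex_weight_mem_Icc hlam hq hγ
  have hid := mul_stepSize_sub_one (γ := γ) (by nlinarith : lam + q ≠ 0)
    (by nlinarith : lam ^ 2 + q ≠ 0)
  have hcq : 0 ≤ (lam - 1) * q := mul_nonneg (by linarith) hq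
  rw [abs_sub_comm, hid, abs_of_nonneg (mul_nonneg hcq hw₀)]
  exact mul_le_of_le_one_right hcq hw₁

theorem stmt_12_general (lam : ℝ) (hlam : 1 < lam)
    (γ : ℕ → ℝ) (hγ : ∀ k, 2 ≤ k → γ k ∈ Set.Icc (0 : ℝ) 1)
    (g1 g2 : ℕ → ℝ)
    (q : ℕ → ℝ) (hq : ∀ j, q j = (g1 j) ^ 2 / (g2 j) ^ 2)
    (α : ℕ → ℝ)
    (hα : ∀ k, 2 ≤ k → α k =
      γ k * (1 + q (k - 1)) / (lam + q (k - 1)) +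
        (1 - γ k) * (lam + q (k - 1)) / (lam ^ 2 + q (k - 1)))
    (hup2 : ∀ k, 2 ≤ k → g2 (k + 1) = (1 - lam * α k) * g2 k) :
    ∀ k, 2 ≤ k → |g2 (k + 1)| ≤ (lam - 1) * q (k - 1) * |g2 k| := by
  intro k hk
  have hq_nonneg : 0 ≤ q (k - 1) := by rw [hq]; positivity
  have hα_eq : α k = stepSize lam (γ k) (q (k - 1)) := hα k hk
  rw [hup2 k hk, abs_mul, hα_eq]
  exact mul_le_mul_of_nonneg_right
    (abs_one_sub_mul_stepSize_le hlam.le hq_nonneg (hγ k hk)) (abs_nonneg _)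

theorem stmt_12 (lam : ℝ) (hlam : 1 < lam)
    (γ : ℕ → ℝ) (hγ : ∀ k, 2 ≤ k → γ k ∈ Set.Icc (0 : ℝ) 1)
    (g1 g2 : ℕ → ℝ)
    (hg11 : g1 1 ≠ 0) (hg21 : g2 1 ≠ 0) (hg12 : g1 2 ≠ 0) (hg22 : g2 2 ≠ 0)
    (q : ℕ → ℝ) (hq : ∀ j, q j = (g1 j) ^ 2 / (g2 j) ^ 2)
    (α : ℕ → ℝ)
    (hα : ∀ k, 2 ≤ k → α k =
      γ k * (1 + q (k - 1)) / (lam + q (k - 1)) +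
        (1 - γ k) * (lam + q (k - 1)) / (lam ^ 2 + q (k - 1)))
    (hup1 : ∀ k, 2 ≤ k → g1 (k + 1) = (1 - α k) * g1 k)
    (hup2 : ∀ k, 2 ≤ k → g2 (k + 1) = (1 - lam * α k) * g2 k) :
    ∀ k, 2 ≤ k → |g2 (k + 1)| ≤ (lam - 1) * q (k - 1) * |g2 k| :=
  stmt_12_general lam hlam γ hγ g1 g2 q hq α hα hup2
end

section
/- In the two-dimensional setting, for every k ≥ 2 one has |g_{k+1}⁽¹⁾| ≤ λ·(λ − 1)·(1/q_{k−1})·|g_k⁽¹⁾|. -/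
/-!
Both ratios `(1 + q)/(λ + q)` and `(λ + q)/(λ² + q)` lie in `(1/λ, 1)` and are at least
`1 - λ(λ - 1)/q`; the same holds for their convex combination `α_k`. Hence `0 < 1 - α_k`,
which gives `|g_{k+1}⁽¹⁾| = (1 - α_k)|g_k⁽¹⁾| ≤ λ(λ - 1)/q_{k-1} · |g_k⁽¹⁾|`, and `λα_k > 1`,
which keeps both components nonzero, so that every `q_j` is positive.
-/

open Set

lemma one_add_div_add_mem {lam r : ℝ} (hlam : 1 < lam) (hr : 0 < r) :
    (1 + r) / (lam + r) ∈ Ioo (1 / lam) 1 ∩ Ici (1 - (lam - 1) / r) := by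
  have hlr : 0 < lam + r := by linarith
  refine ⟨⟨?_, ?_⟩, ?_⟩
  · rw [div_lt_div_iff₀ (by linarith) hlr]; nlinarith
  · rw [div_lt_one hlr]; linarith
  · have h : 1 - (1 + r) / (lam + r) = (lam - 1) / (lam + r) := by field_simp; ring
    rw [mem_Ici, sub_le_comm, h]
    exact div_le_div_of_nonneg_left (by linarith) hr (by linarith)

lemma weighted_ratio_mem {lam q γ : ℝ} (hlam : 1 < lam) (hq : 0 < q) (hγ : γ ∈ Icc (0 : ℝ) 1) :
    γ * (1 + q) / (lam + q) + (1 - γ) * (lam + q) / (lam ^ 2 + q) ∈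
      Ioo (1 / lam) 1 ∩ Ici (1 - lam * (lam - 1) / q) := by
  have hlam0 : 0 < lam := by linarith
  have hconvex : Convex ℝ (Ioo (1 / lam) 1 ∩ Ici (1 - lam * (lam - 1) / q)) :=
    (convex_Ioo _ _).inter (convex_Ici _)
  have ha := one_add_div_add_mem hlam hq
  -- the second endpoint is the first one at `q / lam`
  have hb := one_add_div_add_mem hlam (div_pos hq hlam0)
  have hb_eq : (1 + q / lam) / (lam + q / lam) = (lam + q) / (lam ^ 2 + q) := by
    field_simp
  have hb_bound : (lam - 1) / (q / lam) = lam * (lam - 1) / q := by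
    field_simp
  rw [hb_eq, hb_bound] at hb
  have hmono : Ici (1 - (lam - 1) / q) ⊆ Ici (1 - lam * (lam - 1) / q) := by
    refine Ici_subset_Ici.2 (sub_le_sub_left ?_ _)
    exact div_le_div_of_nonneg_right (le_mul_of_one_le_left (by linarith) hlam.le) hq.le
  have := hconvex (inter_subset_inter_right _ hmono ha) hb hγ.1 (sub_nonneg.2 hγ.2)
    (add_sub_cancel _ _)
  simpa only [smul_eq_mul, mul_div_assoc] using this

lemma one_sub_ne_zero_and_one_sub_mul_ne_zero {lam α : ℝ} (hlam : 0 < lam)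
    (hα : α ∈ Ioo (1 / lam) 1) : 1 - α ≠ 0 ∧ 1 - lam * α ≠ 0 := by
  have : 1 < lam * α := by rw [← div_lt_iff₀' hlam]; exact hα.1
  constructor <;> linarith [hα.2]

theorem stmt_13 (lam : ℝ) (hlam : 1 < lam)
    (γ : ℕ → ℝ) (hγ : ∀ k, 2 ≤ k → γ k ∈ Set.Icc (0 : ℝ) 1)
    (g1 g2 : ℕ → ℝ)
    (hg11 : g1 1 ≠ 0) (hg21 : g2 1 ≠ 0) (hg12 : g1 2 ≠ 0) (hg22 : g2 2 ≠ 0)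
    (q : ℕ → ℝ) (hq : ∀ j, q j = (g1 j) ^ 2 / (g2 j) ^ 2)
    (α : ℕ → ℝ)
    (hα : ∀ k, 2 ≤ k → α k =
      γ k * (1 + q (k - 1)) / (lam + q (k - 1)) +
        (1 - γ k) * (lam + q (k - 1)) / (lam ^ 2 + q (k - 1)))
    (hup1 : ∀ k, 2 ≤ k → g1 (k + 1) = (1 - α k) * g1 k)
    (hup2 : ∀ k, 2 ≤ k → g2 (k + 1) = (1 - lam * α k) * g2 k) :
    ∀ k, 2 ≤ k → |g1 (k + 1)| ≤ lam * (lam - 1) * (1 / q (k - 1)) * |g1 k| := by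
  have hq_pos : ∀ j, g1 j ≠ 0 → g2 j ≠ 0 → 0 < q j := fun j h1 h2 => by
    rw [hq j]; positivity
  have hα_mem : ∀ k, 2 ≤ k → 0 < q (k - 1) →
      α k ∈ Ioo (1 / lam) 1 ∩ Ici (1 - lam * (lam - 1) / q (k - 1)) := fun k hk hqk => by
    rw [hα k hk]; exact weighted_ratio_mem hlam hqk (hγ k hk)
  -- `α (j + 1)` depends on `q (j - 1)`, so nonvanishing propagates along pairs of indices
  have hne : ∀ j, 1 ≤ j → (g1 j ≠ 0 ∧ g2 j ≠ 0) ∧ (g1 (j + 1) ≠ 0 ∧ g2 (j + 1) ≠ 0) := by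
    intro j hj
    induction j, hj using Nat.le_induction with
    | base => exact ⟨⟨hg11, hg21⟩, hg12, hg22⟩
    | succ n _ ih =>
      have hn : 2 ≤ n + 1 := by omega
      have hmem := hα_mem (n + 1) hn (hq_pos n ih.1.1 ih.1.2)
      obtain ⟨h1, h2⟩ := one_sub_ne_zero_and_one_sub_mul_ne_zero (by linarith) hmem.1
      rw [hup1 _ hn, hup2 _ hn]
      exact ⟨ih.2, mul_ne_zero h1 ih.2.1, mul_ne_zero h2 ih.2.2⟩
  intro k hk
  obtain ⟨⟨h1, h2⟩, -⟩ := hne (k - 1) (by omega)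
  obtain ⟨⟨-, hα_lt⟩, hα_ge⟩ := hα_mem k hk (hq_pos _ h1 h2)
  rw [hup1 k hk, abs_mul, abs_of_pos (sub_pos.2 hα_lt), ← div_eq_mul_one_div]
  exact mul_le_mul_of_nonneg_right (by linarith [mem_Ici.1 hα_ge]) (abs_nonneg _)
end

section
/- Let n ≥ 2, let λ₁ ≤ λ₂ ≤ ⋯ ≤ λₙ be positive reals, let g ∈ ℝⁿ, let l be an integer with 1 ≤ l ≤ n−1, and let ε > 0. If Σ_{i=1}^{l} (g⁽ⁱ⁾)² ≤ ε and (g⁽ˡ⁺¹⁾)² ≥ 2ε, then Σ_{i=1}^{n} λᵢ (g⁽ⁱ⁾)² ≥ (2/3)·λ_{l+1}·Σ_{i=1}^{n} (g⁽ⁱ⁾)². Equivalently, the reciprocal of the long BB stepsize, (gᵀAg)/(gᵀg) with A = diag(λ₁,…,λₙ), is at least (2/3)λ_{l+1}. (This is the key inequality verifying part (ii) of Property (A).) -/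
/-!
Split the indices into the head `i < l` and the tail `i ≥ l`. The tail mass `T` contains
`(g⁽ˡ⁺¹⁾)² ≥ 2ε`, while the head mass is at most `ε ≤ T / 2`, so `‖g‖² ≤ (3/2) T`. On the tail
every weight is at least `λ_{l+1}`, hence `gᵀAg ≥ λ_{l+1} T ≥ (2/3) λ_{l+1} ‖g‖²`.
-/

open Finset

section HeadTail

variable {ι : Type*} [Fintype ι] (p : ι → Prop) [DecidablePred p] {x : ι → ℝ}

theorem sum_le_three_halves_mul_sum_filter_not (hx : ∀ i, 0 ≤ x i) {j : ι} (hj : ¬ p j)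
    {ε : ℝ} (hhead : ∑ i ∈ univ.filter p, x i ≤ ε) (htail : 2 * ε ≤ x j) :
    ∑ i, x i ≤ 3 / 2 * ∑ i ∈ univ.filter (fun i => ¬ p i), x i := by
  have hj_le : x j ≤ ∑ i ∈ univ.filter (fun i => ¬ p i), x i :=
    single_le_sum (fun i _ => hx i) (mem_filter.2 ⟨mem_univ j, hj⟩)
  rw [← sum_filter_add_sum_filter_not univ p]
  linarith

theorem mul_sum_filter_not_le_sum_mul {lam : ι → ℝ} (hx : ∀ i, 0 ≤ x i)
    (hlam : ∀ i, 0 ≤ lam i) {c : ℝ} (hc : ∀ i, ¬ p i → c ≤ lam i) :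
    c * ∑ i ∈ univ.filter (fun i => ¬ p i), x i ≤ ∑ i, lam i * x i :=
  calc c * ∑ i ∈ univ.filter (fun i => ¬ p i), x i
      ≤ ∑ i ∈ univ.filter (fun i => ¬ p i), lam i * x i := by
        rw [mul_sum]
        exact sum_le_sum fun i hi => mul_le_mul_of_nonneg_right (hc i (mem_filter.1 hi).2) (hx i)
    _ ≤ ∑ i, lam i * x i :=
        sum_le_sum_of_subset_of_nonneg (filter_subset _ _) fun i _ _ => mul_nonneg (hlam i) (hx i)

theorem two_thirds_mul_sum_le_sum_mul {lam : ι → ℝ} (hx : ∀ i, 0 ≤ x i)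
    (hlam : ∀ i, 0 ≤ lam i) {j : ι} (hj : ¬ p j) (hc : ∀ i, ¬ p i → lam j ≤ lam i)
    {ε : ℝ} (hhead : ∑ i ∈ univ.filter p, x i ≤ ε) (htail : 2 * ε ≤ x j) :
    2 / 3 * lam j * ∑ i, x i ≤ ∑ i, lam i * x i := by
  have hsum := sum_le_three_halves_mul_sum_filter_not p hx hj hhead htail
  have htail_le := mul_sum_filter_not_le_sum_mul p hx hlam hc
  nlinarith [mul_le_mul_of_nonneg_left hsum (hlam j)]

end HeadTail

theorem stmt_18 (n : ℕ)
    (lam : Fin n → ℝ) (hpos : ∀ i, 0 < lam i) (hmono : Monotone lam)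
    (g : Fin n → ℝ)
    (l : ℕ) (hl1 : 1 ≤ l) (hl2 : l ≤ n - 1)
    (ε : ℝ)
    (hsmall : ∑ i ∈ Finset.univ.filter (fun i : Fin n => (i : ℕ) < l), g i ^ 2 ≤ ε)
    (hbig : 2 * ε ≤ g ⟨l, by omega⟩ ^ 2) :
    (2 / 3) * lam ⟨l, by omega⟩ * ∑ i, g i ^ 2 ≤ ∑ i, lam i * g i ^ 2 :=
  two_thirds_mul_sum_le_sum_mul (fun i : Fin n => (i : ℕ) < l) (fun i => sq_nonneg (g i))
    (fun i => (hpos i).le) (lt_irrefl l) (fun _ hi => hmono (Fin.mk_le_of_le_val (not_lt.1 hi)))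
    hsmall hbig
end
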